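/- The parallel heat-bath PCA satisfies detailed balance with respect to the Gibbs measure of the four-body Hamiltonian: for every β>0, every h∈ℝ and all σ,η∈𝒮, P(σ,η)·exp(−H_β(σ)) = P(η,σ)·exp(−H_β(η)), where H_β(σ) = −βh·∑_{x∈Λ}σ(x) − ∑_{x∈Λ} log cosh(β(S_σ(x)+h)). Consequently the PCA is reversible with respect to ν(σ)=exp(−H_β(σ))/Z, Z=∑_{η∈𝒮}exp(−H_β(η)). -/

import Mathlib

open scoped BigOperators Classical
open Filter

namespace PCA

/-- Sites of the two-dimensional discrete torus of side `L`. -/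
abbrev Site (L : ℕ) := ZMod L × ZMod L

/-- Spin configurations: `true` codes the spin `+1`, `false` codes `-1`. -/
abbrev Config (L : ℕ) := Site L → Bool

noncomputable section

/-- The real value of a spin. -/
def spin (b : Bool) : ℝ := if b then 1 else -1

def east (L : ℕ) : Site L := (1, 0)
def north (L : ℕ) : Site L := (0, 1)

variable {L : ℕ}

/-- `S_σ(x)`: the sum of the spins of the four nearest neighbours of `x`. -/
def nnS (σ : Config L) (x : Site L) : ℝ :=
  spin (σ (x + east L)) + spin (σ (x - east L)) +
    spin (σ (x + north L)) + spin (σ (x - north L))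

/-- Single-site heat-bath probability `p_x(a|σ)`. -/
def flipP (β h : ℝ) (σ : Config L) (x : Site L) (a : Bool) : ℝ :=
  1 / (1 + Real.exp (-2 * β * spin a * (nnS σ x + h)))

/-- The PCA transition matrix `P(σ,η) = ∏_x p_x(η(x)|σ)`. -/
def Pmat (β h : ℝ) [NeZero L] (σ η : Config L) : ℝ :=
  ∏ x : Site L, flipP β h σ x (η x)

/-- The four-body Hamiltonian `H_β`. -/
def Ham (β h : ℝ) [NeZero L] (σ : Config L) : ℝ :=
  -(β * h) * ∑ x : Site L, spin (σ x)
    - ∑ x : Site L, Real.log (Real.cosh (β * (nnS σ x + h)))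

/-- The zero-temperature energy `E`. -/
def En (h : ℝ) [NeZero L] (σ : Config L) : ℝ :=
  -h * ∑ x : Site L, spin (σ x) - ∑ x : Site L, |nnS σ x + h|

/-- The zero-temperature drift map `T`. -/
def T (h : ℝ) (σ : Config L) : Config L :=
  fun x => if 0 < nnS σ x + h then true else false

def plusC (L : ℕ) : Config L := fun _ => true
def minusC (L : ℕ) : Config L := fun _ => false

/-- The even chessboard `C_e(x) = (-1)^(x₁+x₂)` (`true` at even-parity sites). -/
def chessE (L : ℕ) : Config L := fun x => decide ((x.1 + x.2).val % 2 = 0)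
def chessO (L : ℕ) : Config L := fun x => !(chessE L x)
def chessSet (L : ℕ) : Set (Config L) := {chessE L, chessO L}

def IsChessCfg {L : ℕ} (C : Config L) : Prop := C = chessE L ∨ C = chessO L

/-- A trap: a stable configuration or an element of a stable pair. -/
def IsTrap (h : ℝ) (σ : Config L) : Prop := T h σ = σ ∨ T h (T h σ) = σ

/-- The trap `σ̂` reached by the downhill path started at `σ`. -/
def hatTrap (h : ℝ) (σ : Config L) : Config L :=
  (T h)^[sInf {n | IsTrap h ((T h)^[n] σ)}] σ

/-- The basin of attraction `𝔅(ζ)` of a trap `ζ`. -/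
def basin (h : ℝ) (ζ : Config L) : Set (Config L) := {σ | hatTrap h σ = ζ}

/-- The interior of a rectangle on the dual lattice: an `a × b` block of sites
with lower-left corner `c`. -/
def rect (c : Site L) (a b : ℕ) : Set (Site L) :=
  { y | ∃ i j : ℕ, i < a ∧ j < b ∧ y = c + ((i : ZMod L), (j : ZMod L)) }

/-- The configuration equal to `ζ` inside the given rectangle and to `bg` outside. -/
def rectCfg (bg ζ : Config L) (c : Site L) (a b : ℕ) : Config L :=
  fun x => if x ∈ rect c a b then ζ x else bg x

/-- Differences between sites at euclidean distance at most `2` on the torus. -/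
def closeDiff (d : Site L) : Prop :=
  ∃ u v : ℤ, u ^ 2 + v ^ 2 ≤ 4 ∧ d = ((u : ZMod L), (v : ZMod L))

/-- Two sets of sites are non-interacting iff all pairs of sites are at
euclidean distance `> 2` (equivalently `≥ √5`). -/
def NonInteracting (A B : Set (Site L)) : Prop :=
  ∀ x ∈ A, ∀ y ∈ B, ¬ closeDiff (y - x)

/-- Nearest-neighbour adjacency on the torus. -/
def Adj (x y : Site L) : Prop :=
  y = x + east L ∨ y = x - east L ∨ y = x + north L ∨ y = x - north L

def stepSet : Set (ℤ × ℤ) := {(1, 0), (-1, 0), (0, 1), (0, -1)}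

/-- `X` contains a nearest-neighbour loop winding around the torus
(a percolating, torus-wrapping, cluster is a cluster containing such a loop). -/
def Wrapping (X : Set (Site L)) : Prop :=
  ∃ (n : ℕ) (f : ℕ → Site L) (d : ℕ → ℤ × ℤ),
    0 < n ∧ f n = f 0 ∧ (∑ i ∈ Finset.range n, d i) ≠ 0 ∧
    ∀ i < n, d i ∈ stepSet ∧
      f (i + 1) = f i + (((d i).1 : ZMod L), ((d i).2 : ZMod L)) ∧ f i ∈ X

/-- `σ` has a well defined sea of the homogeneous phase `α`. -/
def SeaHom (h : ℝ) (α σ : Config L) : Prop :=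
  ∃ X : Set (Site L), Wrapping X ∧ (∀ x ∈ X, σ x = α x) ∧
    ∀ n : ℕ, 1 ≤ n → ∀ x ∈ X, (T h)^[n] σ x = α x

/-- `σ` has a well defined sea of the chessboard `C`. -/
def SeaChess (h : ℝ) (C σ : Config L) : Prop :=
  ∃ X : Set (Site L), Wrapping X ∧ (∀ x ∈ X, σ x = C x) ∧
    ∀ n : ℕ, 1 ≤ n → ∀ x ∈ X, (T h)^[2 * n] σ x = C x

def SeaMinus (h : ℝ) (σ : Config L) : Prop := SeaHom h (minusC L) σ
def SeaPlus (h : ℝ) (σ : Config L) : Prop := SeaHom h (plusC L) σ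
def SeaChessAny (h : ℝ) (σ : Config L) : Prop :=
  SeaChess h (chessE L) σ ∨ SeaChess h (chessO L) σ

/-- Communication height `H(σ,η) = H(σ) - log P(σ,η)`. -/
def commH (β h : ℝ) [NeZero L] (σ η : Config L) : ℝ :=
  Ham β h σ - Real.log (Pmat β h σ η)

/-- Minimal height (minmax) `Φ(σ,η)` over all paths from `σ` to `η`. -/
def Phi (β h : ℝ) [NeZero L] (σ η : Config L) : ℝ :=
  sInf { v | ∃ (n : ℕ) (f : ℕ → Config L), 0 < n ∧ f 0 = σ ∧ f n = η ∧
    v = sSup { w | ∃ i < n, w = commH β h (f i) (f (i + 1)) } }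

/-- The barrier `Υ(η) = min_{ζ ∉ 𝔅(η)} Φ(η,ζ)` to exit the basin of the trap `η`. -/
def Ups (β h : ℝ) [NeZero L] (η : Config L) : ℝ :=
  sInf { v | ∃ ζ : Config L, ζ ∉ basin h η ∧ v = Phi β h η ζ }

/-- Probability, starting from `σ0`, that the first visit to `E` happens
at time `n` and at a state of `F`. -/
def firstHitP (β h : ℝ) [NeZero L] (σ0 : Config L) (E F : Set (Config L)) (n : ℕ) : ℝ :=
  ∑ f : Fin (n + 1) → Config L,
    if f 0 = σ0 ∧ (∀ i : Fin (n + 1), (i : ℕ) < n → f i ∉ E) ∧ f (Fin.last n) ∈ E ∩ F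
    then ∏ i : Fin n, Pmat β h (f i.castSucc) (f i.succ) else 0

/-- `ℙ_{σ0}(τ_A < τ_B)`. -/
def probHitBefore (β h : ℝ) [NeZero L] (σ0 : Config L) (A B : Set (Config L)) : ℝ :=
  ∑' n : ℕ, firstHitP β h σ0 (A ∪ B) (A \ B) n

/-- `ℙ_{σ0}(τ_D ∈ I)` (for `τ_D < ∞`). -/
def probTauIn (β h : ℝ) [NeZero L] (σ0 : Config L) (D : Set (Config L)) (I : Set ℝ) : ℝ :=
  ∑' n : ℕ, if (n : ℝ) ∈ I then firstHitP β h σ0 D Set.univ n else 0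

/-- `ℙ_{σ0}(τ_D > t)` (including the event that `D` is never visited). -/
def probTauGT (β h : ℝ) [NeZero L] (σ0 : Config L) (D : Set (Config L)) (t : ℝ) : ℝ :=
  1 - probTauIn β h σ0 D (Set.Iic t)

/-- `ℙ_{σ0}(σ_{τ_E} ∈ F)`. -/
def probFirstHitIn (β h : ℝ) [NeZero L] (σ0 : Config L) (E F : Set (Config L)) : ℝ :=
  ∑' n : ℕ, firstHitP β h σ0 E F n

/-- The critical length `λ = ⌊2/h⌋ + 1`. -/
def lam (h : ℝ) : ℕ := Nat.floor (2 / h) + 1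

/-- The protocritical height `Γ = -2hλ² + 2λ(4+h) - 2h`. -/
def Gam (h : ℝ) : ℝ :=
  -2 * h * (lam h : ℝ) ^ 2 + 2 * (lam h : ℝ) * (4 + h) - 2 * h

/-- The geometric conditions of Proposition 3.3 (iii) for a trap in the sea of
minuses, with `s` chessboard rectangles (indices `< s`) and `k - s` plus
rectangles (indices `≥ s`). -/
def MinusMultiSpec (h : ℝ) (σ : Config L) (s : ℕ) {k : ℕ}
    (c : Fin k → Site L) (a b : Fin k → ℕ) : Prop :=
  1 ≤ k ∧ s ≤ k ∧
  (∀ i, 2 ≤ min (a i) (b i) ∧ max (a i) (b i) ≤ L - 2) ∧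
  (∀ i j, i ≠ j → Disjoint (rect (c i) (a i) (b i)) (rect (c j) (a j) (b j))) ∧
  (∀ j i : Fin k, (j : ℕ) < s → s ≤ (i : ℕ) →
    NonInteracting (rect (c j) (a j) (b j)) (rect (c i) (a i) (b i))) ∧
  (∀ i j : Fin k, s ≤ (i : ℕ) → s ≤ (j : ℕ) → i ≠ j →
    NonInteracting (rect (c i) (a i) (b i)) (rect (c j) (a j) (b j))) ∧
  (∀ x, (∀ i, x ∉ rect (c i) (a i) (b i)) → σ x = false) ∧
  (∀ i : Fin k, s ≤ (i : ℕ) → ∀ x ∈ rect (c i) (a i) (b i), σ x = true) ∧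
  ∃ Cp : Fin k → Config L,
    (∀ j : Fin k, (j : ℕ) < s → IsChessCfg (Cp j) ∧
      ∃ (k' : ℕ) (c' : Fin k' → Site L) (a' b' : Fin k' → ℕ),
        (∀ i, rect (c' i) (a' i) (b' i) ⊆ rect (c j) (a j) (b j)) ∧
        (∀ i i', i ≠ i' →
          NonInteracting (rect (c' i) (a' i) (b' i)) (rect (c' i') (a' i') (b' i'))) ∧
        (∀ i, ∀ x ∈ rect (c' i) (a' i) (b' i), σ x = true) ∧
        (∀ x ∈ rect (c j) (a j) (b j),
          (∀ i, x ∉ rect (c' i) (a' i) (b' i)) → σ x = Cp j x)) ∧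
    (∀ i j : Fin k, (i : ℕ) < s → (j : ℕ) < s → i ≠ j → Cp i = Cp j →
      NonInteracting (rect (c i) (a i) (b i)) (rect (c j) (a j) (b j)))

/-- `η ∈ 𝒪_{-1}` (a `(λ-1) × λ` chessboard droplet in the sea of minuses) and
`ζ ∈ π_{-1}(η)` is one of its protocritical droplets. -/
def ProtoRel (h : ℝ) (η ζ : Config L) : Prop :=
  ∃ (c : Site L) (a b : ℕ) (C : Config L) (y z : Site L),
    IsChessCfg C ∧
    ((a = lam h - 1 ∧ b = lam h) ∨ (a = lam h ∧ b = lam h - 1)) ∧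
    (∀ x ∈ rect c a b, η x = C x) ∧ (∀ x ∉ rect c a b, η x = false) ∧
    y ∉ rect c a b ∧ z ∈ rect c a b ∧ Adj y z ∧ C z = true ∧
    (∀ x ∈ rect c a b, ζ x = !(C x)) ∧ ζ y = true ∧
    (∀ x, x ∉ rect c a b → x ≠ y → ζ x = false)

/-- The set `𝒪_{-1}` of `(λ-1) × λ` chessboard droplets in the sea of minuses. -/
def OSet (h : ℝ) (L : ℕ) : Set (Config L) :=
  { η | ∃ (c : Site L) (a b : ℕ) (C : Config L),
      IsChessCfg C ∧ ((a = lam h - 1 ∧ b = lam h) ∨ (a = lam h ∧ b = lam h - 1)) ∧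
      (∀ x ∈ rect c a b, η x = C x) ∧ (∀ x ∉ rect c a b, η x = false) }

/-- The set `𝒫_{-1}` of protocritical droplets. -/
def ProtoSet (h : ℝ) (L : ℕ) : Set (Config L) := { ζ | ∃ η, ProtoRel h η ζ }

end

/-! Writing the heat-bath probability as `p_x(a|σ) = exp (β a (S_σ(x) + h)) / (2 cosh (β (S_σ(x) + h)))`,
the `cosh` normalisations of `P(σ,η)` are exactly the factors `exp (log cosh …)` of `exp (-H_β(σ))`.
What remains, `exp (β ∑ η(x) S_σ(x) + β h ∑ (η(x) + σ(x))) / 2^|Λ|`, is symmetric in `σ` and `η`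
because `∑ η(x) S_σ(x) = ∑_{x ~ y} η(x) σ(y)` and the neighbour relation is symmetric. -/

lemma one_div_one_add_exp_neg_two_mul (t : ℝ) :
    1 / (1 + Real.exp (-(2 * t))) = Real.exp t / (2 * Real.cosh t) := by
  have hexp : Real.exp t * Real.exp (-(2 * t)) = Real.exp (-t) := by
    rw [← Real.exp_add]; ring_nf
  rw [Real.cosh_eq, div_eq_div_iff (by positivity) (by positivity)]
  linear_combination -hexp

lemma cosh_spin_mul (a : Bool) (t : ℝ) : Real.cosh (spin a * t) = Real.cosh t := by
  cases a <;> simp [spin]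

variable {L : ℕ}

lemma flipP_eq_exp_div_cosh (β h : ℝ) (σ : Config L) (x : Site L) (a : Bool) :
    flipP β h σ x a =
      Real.exp (β * spin a * (nnS σ x + h)) / (2 * Real.cosh (β * (nnS σ x + h))) := by
  have hcosh : Real.cosh (β * spin a * (nnS σ x + h)) = Real.cosh (β * (nnS σ x + h)) := by
    rw [← cosh_spin_mul a (β * (nnS σ x + h))]
    ring_nf
  rw [flipP, ← hcosh, ← one_div_one_add_exp_neg_two_mul]
  ring_nf

lemma sum_mul_comp_add {G R : Type*} [AddGroup G] [Fintype G] [CommSemiring R]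
    (f g : G → R) (v : G) :
    ∑ x, f x * g (x + v) = ∑ x, g x * f (x - v) :=
  Fintype.sum_equiv (Equiv.addRight v) _ _ fun x => by simp [mul_comm]

section Torus

variable [NeZero L]

lemma Pmat_eq (β h : ℝ) (σ η : Config L) :
    Pmat β h σ η =
      Real.exp (β * ∑ x : Site L, spin (η x) * (nnS σ x + h)) /
        (2 ^ Fintype.card (Site L) * ∏ x : Site L, Real.cosh (β * (nnS σ x + h))) := by
  simp_rw [Pmat, flipP_eq_exp_div_cosh, Finset.prod_div_distrib, Finset.prod_mul_distrib,
    ← Real.exp_sum, Finset.mul_sum, mul_assoc, Finset.prod_const, Finset.card_univ]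

lemma exp_neg_Ham (β h : ℝ) (σ : Config L) :
    Real.exp (-Ham β h σ) =
      Real.exp (β * h * ∑ x : Site L, spin (σ x)) *
        ∏ x : Site L, Real.cosh (β * (nnS σ x + h)) := by
  rw [Ham, show ∀ a b : ℝ, -(-(β * h) * a - b) = β * h * a + b from fun _ _ => by ring,
    Real.exp_add, Real.exp_sum]
  congr 1
  exact Finset.prod_congr rfl fun x _ => Real.exp_log (Real.cosh_pos _)

lemma Pmat_mul_exp_neg_Ham (β h : ℝ) (σ η : Config L) :
    Pmat β h σ η * Real.exp (-Ham β h σ) =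
      Real.exp (β * ∑ x : Site L, spin (η x) * nnS σ x
        + β * h * ∑ x : Site L, spin (η x) + β * h * ∑ x : Site L, spin (σ x))
        / 2 ^ Fintype.card (Site L) := by
  have hcosh : (0 : ℝ) < ∏ x : Site L, Real.cosh (β * (nnS σ x + h)) :=
    Finset.prod_pos fun x _ => Real.cosh_pos _
  simp_rw [Pmat_eq, exp_neg_Ham, mul_add, Finset.sum_add_distrib, ← Finset.sum_mul,
    Real.exp_add]
  field_simp
  rw [← Real.exp_add]
  congr 1
  ring

lemma sum_spin_mul_nnS_comm (σ η : Config L) :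
    ∑ x : Site L, spin (η x) * nnS σ x = ∑ x : Site L, spin (σ x) * nnS η x := by
  simp_rw [nnS, mul_add, Finset.sum_add_distrib]
  rw [sum_mul_comp_add (fun x => spin (η x)) (fun x => spin (σ x)) (east L),
    sum_mul_comp_add (fun x => spin (η x)) (fun x => spin (σ x)) (north L),
    ← sum_mul_comp_add (fun x => spin (σ x)) (fun x => spin (η x)) (east L),
    ← sum_mul_comp_add (fun x => spin (σ x)) (fun x => spin (η x)) (north L)]
  ring

end Torus

theorem detailed_balance_general (L : ℕ) [NeZero L] (β h : ℝ) (σ η : Config L) :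
    Pmat β h σ η * Real.exp (-Ham β h σ) = Pmat β h η σ * Real.exp (-Ham β h η) ∧
    Pmat β h σ η * (Real.exp (-Ham β h σ) / ∑ ξ : Config L, Real.exp (-Ham β h ξ)) =
      Pmat β h η σ * (Real.exp (-Ham β h η) / ∑ ξ : Config L, Real.exp (-Ham β h ξ)) := by
  have balance : Pmat β h σ η * Real.exp (-Ham β h σ) = Pmat β h η σ * Real.exp (-Ham β h η) := by
    rw [Pmat_mul_exp_neg_Ham, Pmat_mul_exp_neg_Ham, sum_spin_mul_nnS_comm σ η]
    congr 2
    ring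
  refine ⟨balance, ?_⟩
  rw [← mul_div_assoc, ← mul_div_assoc, balance]

/-- detailed balance with respect to the Gibbs measure of the
four-body Hamiltonian, and the consequent reversibility w.r.t. `ν`. -/
theorem detailed_balance (L : ℕ) [NeZero L] (β h : ℝ) (hβ : 0 < β) (σ η : Config L) :
    Pmat β h σ η * Real.exp (-Ham β h σ) = Pmat β h η σ * Real.exp (-Ham β h η) ∧
    Pmat β h σ η * (Real.exp (-Ham β h σ) / ∑ ξ : Config L, Real.exp (-Ham β h ξ)) =
      Pmat β h η σ * (Real.exp (-Ham β h η) / ∑ ξ : Config L, Real.exp (-Ham β h ξ)) :=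
  detailed_balance_general L β h σ η

end PCA
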